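/- Let E be a finite-dimensional real inner product space, let M : E →ₗ[ℝ] E be self-adjoint and positive semidefinite, and let V be a subspace of E with (ker M) ⊓ V = ⊥, so that N := M ∘ P_V + P_{V⊥} is bijective; define the Bott–Duffin inverse A := P_V ∘ N⁻¹. Then A is self-adjoint and positive semidefinite: ⟪A x, y⟫ = ⟪x, A y⟫ and ⟪A x, x⟫ ≥ 0 for all x, y ∈ E. -/

import Mathlib

open RealInnerProductSpace

/-- The orthogonal projection onto a subspace, as a linear endomorphism. -/
noncomputable def orthProj {E : Type*} [NormedAddCommGroup E] [InnerProductSpace ℝ E]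
    [FiniteDimensional ℝ E] (V : Submodule ℝ E) : E →ₗ[ℝ] E :=
  (V.subtypeL.comp (V.orthogonalProjectionOnto)).toLinearMap

/-! Since `N (N⁻¹ y) = M (A y) + P_{V⊥} (N⁻¹ y)` and `A x ∈ V` is orthogonal to the second
summand, `⟪A x, y⟫ = ⟪M (A x), A y⟫`; this is a symmetric, positive semidefinite form in `x, y`
because `M` is. -/

section BottDuffin

variable {E : Type*} [NormedAddCommGroup E] [InnerProductSpace ℝ E] [FiniteDimensional ℝ E]

theorem orthProj_apply_mem (V : Submodule ℝ E) (u : E) : orthProj V u ∈ V :=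
  (V.orthogonalProjectionOnto u).2

theorem inner_comp_orthProj_add_orthProj_orthogonal {M : E →ₗ[ℝ] E}
    (hMsym : ∀ x y : E, ⟪M x, y⟫ = ⟪x, M y⟫) {V : Submodule ℝ E} {u : E} (hu : u ∈ V)
    (s : E) : ⟪u, (M ∘ₗ orthProj V + orthProj Vᗮ) s⟫ = ⟪M u, orthProj V s⟫ := by
  have horth : ⟪u, orthProj Vᗮ s⟫ = 0 :=
    Submodule.inner_right_of_mem_orthogonal hu (orthProj_apply_mem Vᗮ s)
  rw [LinearMap.add_apply, LinearMap.comp_apply, inner_add_right, horth, add_zero, hMsym]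

end BottDuffin

theorem bott_duffin_selfAdjoint_posSemidef_general
    {E : Type*} [NormedAddCommGroup E] [InnerProductSpace ℝ E] [FiniteDimensional ℝ E]
    (M : E →ₗ[ℝ] E)
    (hMsym : ∀ x y : E, ⟪M x, y⟫ = ⟪x, M y⟫)
    (hMpsd : ∀ x : E, 0 ≤ ⟪M x, x⟫)
    (V : Submodule ℝ E)
    (N : E →ₗ[ℝ] E) (hN : N = M ∘ₗ orthProj V + orthProj Vᗮ)
    (hNbij : Function.Bijective N)
    (A : E →ₗ[ℝ] E)
    (hA : A = orthProj V ∘ₗ (LinearEquiv.ofBijective N hNbij).symm.toLinearMap) :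
    (∀ x y : E, ⟪A x, y⟫ = ⟪x, A y⟫) ∧ ∀ x : E, 0 ≤ ⟪A x, x⟫ := by
  set S := (LinearEquiv.ofBijective N hNbij).symm
  have hA_apply (x : E) : A x = orthProj V (S x) := by rw [hA]; rfl
  have hNS (y : E) : N (S y) = y := (LinearEquiv.ofBijective N hNbij).apply_symm_apply y
  have key (x y : E) : ⟪A x, y⟫ = ⟪M (A x), A y⟫ := by
    rw [← hNS y, hN, hA_apply x,
      inner_comp_orthProj_add_orthProj_orthogonal hMsym (orthProj_apply_mem V _), ← hN, hNS,
      hA_apply]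
  refine ⟨fun x y => ?_, fun x => key x x ▸ hMpsd (A x)⟩
  rw [key, hMsym, real_inner_comm, ← key, real_inner_comm]

theorem bott_duffin_selfAdjoint_posSemidef
    {E : Type*} [NormedAddCommGroup E] [InnerProductSpace ℝ E] [FiniteDimensional ℝ E]
    (M : E →ₗ[ℝ] E)
    (hMsym : ∀ x y : E, ⟪M x, y⟫ = ⟪x, M y⟫)
    (hMpsd : ∀ x : E, 0 ≤ ⟪M x, x⟫)
    (V : Submodule ℝ E)
    (hker : LinearMap.ker M ⊓ V = ⊥)
    (N : E →ₗ[ℝ] E) (hN : N = M ∘ₗ orthProj V + orthProj Vᗮ)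
    (hNbij : Function.Bijective N)
    (A : E →ₗ[ℝ] E)
    (hA : A = orthProj V ∘ₗ (LinearEquiv.ofBijective N hNbij).symm.toLinearMap) :
    (∀ x y : E, ⟪A x, y⟫ = ⟪x, A y⟫) ∧ ∀ x : E, 0 ≤ ⟪A x, x⟫ :=
  bott_duffin_selfAdjoint_posSemidef_general M hMsym hMpsd V N hN hNbij A hA
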